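/- Let V be an open subset of ℝ⁵ = ℍ×ℝ and let v : V → ℝ be of class C². Then for every z = (z₁,z₂) ∈ π^{−1}(V) ⊂ ℝ⁸, Δ(v ∘ π)(z) = 4(|z₁|² + |z₂|²)·(Δv)(π(z)), where the Laplacian on the left is the Euclidean Laplacian on ℝ⁸ and on the right the Euclidean Laplacian on ℝ⁵. Equivalently, Δ(v ∘ π)(z) = 4|π(z)|·(Δv)(π(z)), since |π(z)| = |z₁|² + |z₂|². -/

import Mathlib

/-- The Laplacian (trace of the second derivative) of a real-valued function on a
finite-dimensional Euclidean space, computed in the standard orthonormal coordinates. -/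
noncomputable def lap {ι : Type*} [Fintype ι] [DecidableEq ι]
    (u : EuclideanSpace ℝ ι → ℝ) (x : EuclideanSpace ℝ ι) : ℝ :=
  ∑ i, iteratedFDeriv ℝ 2 u x ![EuclideanSpace.single i 1, EuclideanSpace.single i 1]

/-- The first quaternion coordinate of a point of ℝ⁸ = ℍ×ℍ. -/
def quat1 (x : EuclideanSpace ℝ (Fin 8)) : Quaternion ℝ := ⟨x 0, x 1, x 2, x 3⟩

/-- The second quaternion coordinate of a point of ℝ⁸ = ℍ×ℍ. -/
def quat2 (x : EuclideanSpace ℝ (Fin 8)) : Quaternion ℝ := ⟨x 4, x 5, x 6, x 7⟩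

/-- The Hopf map π : ℝ⁸ = ℍ×ℍ → ℝ⁵ = ℍ×ℝ, π(z₁,z₂) = (2·conj(z₁)·z₂, |z₁|² − |z₂|²). -/
noncomputable def hopfH (x : EuclideanSpace ℝ (Fin 8)) : EuclideanSpace ℝ (Fin 5) :=
  WithLp.toLp 2 ![(2 * star (quat1 x) * quat2 x).re,
    (2 * star (quat1 x) * quat2 x).imI,
    (2 * star (quat1 x) * quat2 x).imJ,
    (2 * star (quat1 x) * quat2 x).imK,
    ‖quat1 x‖ ^ 2 - ‖quat2 x‖ ^ 2]

/-!
Write π(x) = B(x, x) for the symmetric bilinear map B obtained by polarizing π. Then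
Dπ(z) = 2B(z, ·) and D²π = 2B, so the chain rule gives
Δ(v ∘ π)(z) = ∑ᵢ D²v(π z)(Dπ(z) eᵢ, Dπ(z) eᵢ) + Dv(π z)(∑ᵢ 2B(eᵢ, eᵢ)).
The components of π are harmonic quadratic forms, so ∑ᵢ B(eᵢ, eᵢ) = 0, and the rows of B(z, ·)
are orthogonal of length |z|, i.e. Dπ(z) Dπ(z)ᵀ = 4|z|² I; hence the first sum is 4|z|² Δv(π z).
Finally |π(z)| = |z₁|² + |z₂|² = |z|².
-/

open Topology Finset

section SecondDerivative

variable {𝕜 : Type*} [NontriviallyNormedField 𝕜]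
  {E F G : Type*} [NormedAddCommGroup E] [NormedSpace 𝕜 E] [NormedAddCommGroup F]
  [NormedSpace 𝕜 F] [NormedAddCommGroup G] [NormedSpace 𝕜 G]

theorem fderiv_fderiv_comp_apply {f : E → F} {v : F → G} {z : E}
    (hv : ContDiffAt 𝕜 2 v (f z)) (hf : ContDiffAt 𝕜 2 f z) (u w : E) :
    fderiv 𝕜 (fderiv 𝕜 (v ∘ f)) z u w =
      fderiv 𝕜 (fderiv 𝕜 v) (f z) (fderiv 𝕜 f z u) (fderiv 𝕜 f z w) +
        fderiv 𝕜 v (f z) (fderiv 𝕜 (fderiv 𝕜 f) z u w) := by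
  have hv' : ∀ᶠ x in 𝓝 z, DifferentiableAt 𝕜 v (f x) :=
    hf.continuousAt.eventually <|
      (hv.eventually (by simp)).mono fun y hy => hy.differentiableAt two_ne_zero
  have hf' : ∀ᶠ x in 𝓝 z, DifferentiableAt 𝕜 f x :=
    (hf.eventually (by simp)).mono fun x hx => hx.differentiableAt two_ne_zero
  have hchain : fderiv 𝕜 (v ∘ f) =ᶠ[𝓝 z] fun x => (fderiv 𝕜 v (f x)).comp (fderiv 𝕜 f x) :=
    (hv'.and hf').mono fun x hx => fderiv_comp x hx.1 hx.2
  have hv2 : DifferentiableAt 𝕜 (fderiv 𝕜 v) (f z) :=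
    (hv.fderiv_right (m := 1) le_rfl).differentiableAt one_ne_zero
  have hf2 : DifferentiableAt 𝕜 (fderiv 𝕜 f) z :=
    (hf.fderiv_right (m := 1) le_rfl).differentiableAt one_ne_zero
  have hsecond : HasFDerivAt (fun x => (fderiv 𝕜 v (f x)).comp (fderiv 𝕜 f x)) _ z :=
    (hv2.hasFDerivAt.comp z (hf.differentiableAt two_ne_zero).hasFDerivAt).clm_comp
      hf2.hasFDerivAt
  rw [hchain.fderiv_eq, hsecond.fderiv]
  simp only [add_apply, ContinuousLinearMap.coe_comp, Function.comp_apply,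
    ContinuousLinearMap.compL_apply, ContinuousLinearMap.flip_apply]
  exact add_comm _ _

theorem ContinuousLinearMap.hasFDerivAt_apply_self_of_comm (B : E →L[𝕜] E →L[𝕜] F)
    (hB : ∀ x y, B x y = B y x) (x : E) :
    HasFDerivAt (fun y => B y y) ((2 : 𝕜) • B x) x := by
  refine (B.hasFDerivAt_of_bilinear (hasFDerivAt_id x) (hasFDerivAt_id x)).congr_fderiv ?_
  ext u : 1
  simp [hB u x, two_smul]

end SecondDerivative

section Laplacian

variable {ι κ : Type*} [Fintype ι] [Fintype κ]

local notation "e" => fun i => EuclideanSpace.single i (1 : ℝ)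

theorem lap_comp [DecidableEq ι] {f : EuclideanSpace ℝ ι → EuclideanSpace ℝ κ}
    {v : EuclideanSpace ℝ κ → ℝ} {z : EuclideanSpace ℝ ι}
    (hv : ContDiffAt ℝ 2 v (f z)) (hf : ContDiffAt ℝ 2 f z) :
    lap (v ∘ f) z =
      ∑ i, fderiv ℝ (fderiv ℝ v) (f z) (fderiv ℝ f z (e i)) (fderiv ℝ f z (e i)) +
        fderiv ℝ v (f z) (∑ i, fderiv ℝ (fderiv ℝ f) z (e i) (e i)) := by
  simp only [lap, iteratedFDeriv_two_apply, Matrix.cons_val_zero, Matrix.cons_val_one,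
    fderiv_fderiv_comp_apply hv hf, map_sum, sum_add_distrib]

theorem sum_apply_apply_eq_mul_sum [DecidableEq κ]
    (H : EuclideanSpace ℝ κ →L[ℝ] EuclideanSpace ℝ κ →L[ℝ] ℝ)
    (w : ι → EuclideanSpace ℝ κ) (c : ℝ)
    (hw : ∀ α β, ∑ i, w i α * w i β = if α = β then c else 0) :
    ∑ i, H (w i) (w i) = c * ∑ α, H (e α) (e α) := by
  have hexpand : ∀ x : EuclideanSpace ℝ κ, x = ∑ α, x α • e α := fun x => by
    simpa only [EuclideanSpace.basisFun_repr, EuclideanSpace.basisFun_apply] using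
      ((EuclideanSpace.basisFun κ ℝ).sum_repr x).symm
  calc ∑ i, H (w i) (w i)
      = ∑ i, ∑ α, ∑ β, w i α * w i β * H (e α) (e β) := by
        refine sum_congr rfl fun i _ => ?_
        conv_lhs => rw [hexpand (w i)]
        simp only [map_sum, map_smul, _root_.sum_apply, smul_apply, smul_eq_mul, mul_sum]
        rw [sum_comm]
        exact sum_congr rfl fun _ _ => sum_congr rfl fun _ _ => by ring
    _ = ∑ α, ∑ β, (∑ i, w i α * w i β) * H (e α) (e β) := by
        simp only [sum_mul]
        rw [sum_comm]
        exact sum_congr rfl fun _ _ => sum_comm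
    _ = c * ∑ α, H (e α) (e α) := by
        simp [hw, mul_sum]

/-- `hconf` says that `Df(z) Df(z)ᵀ = c • 1` (horizontal conformality) and `hharm` that every
component of `f` is harmonic at `z`. -/
theorem lap_comp_eq_mul_lap [DecidableEq ι] [DecidableEq κ]
    {f : EuclideanSpace ℝ ι → EuclideanSpace ℝ κ} {v : EuclideanSpace ℝ κ → ℝ}
    {z : EuclideanSpace ℝ ι} {c : ℝ}
    (hv : ContDiffAt ℝ 2 v (f z)) (hf : ContDiffAt ℝ 2 f z)
    (hconf : ∀ α β, ∑ i, fderiv ℝ f z (e i) α * fderiv ℝ f z (e i) β = if α = β then c else 0)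
    (hharm : ∑ i, fderiv ℝ (fderiv ℝ f) z (e i) (e i) = 0) :
    lap (v ∘ f) z = c * lap v (f z) := by
  rw [lap_comp hv hf, hharm, map_zero, add_zero, sum_apply_apply_eq_mul_sum _ _ c hconf]
  simp only [lap, iteratedFDeriv_two_apply, Matrix.cons_val_zero, Matrix.cons_val_one]

end Laplacian

-- The polarization of `hopfH`: its components are those of `conj(x₁) y₂ + conj(y₁) x₂` and
-- `⟪x₁, y₁⟫ - ⟪x₂, y₂⟫`.
def hopfPolar (x y : EuclideanSpace ℝ (Fin 8)) : EuclideanSpace ℝ (Fin 5) :=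
  WithLp.toLp 2
    ![x 0*y 4 + x 4*y 0 + x 1*y 5 + x 5*y 1 + x 2*y 6 + x 6*y 2 + x 3*y 7 + x 7*y 3,
      x 0*y 5 + x 5*y 0 - x 1*y 4 - x 4*y 1 + x 3*y 6 + x 6*y 3 - x 2*y 7 - x 7*y 2,
      x 0*y 6 + x 6*y 0 + x 1*y 7 + x 7*y 1 - x 2*y 4 - x 4*y 2 - x 3*y 5 - x 5*y 3,
      x 0*y 7 + x 7*y 0 - x 1*y 6 - x 6*y 1 + x 2*y 5 + x 5*y 2 - x 3*y 4 - x 4*y 3,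
      x 0*y 0 + x 1*y 1 + x 2*y 2 + x 3*y 3 - x 4*y 4 - x 5*y 5 - x 6*y 6 - x 7*y 7]

noncomputable def hopfBilin :
    EuclideanSpace ℝ (Fin 8) →L[ℝ] EuclideanSpace ℝ (Fin 8) →L[ℝ] EuclideanSpace ℝ (Fin 5) :=
  LinearMap.toContinuousLinearMap <| LinearMap.toContinuousLinearMap.toLinearMap ∘ₗ
    LinearMap.mk₂ ℝ hopfPolar
      (fun _ _ _ => by
        ext γ; fin_cases γ <;>
          simp only [hopfPolar, PiLp.add_apply, Fin.isValue, Fin.zero_eta, Fin.mk_one,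
            Fin.reduceFinMk, Matrix.cons_val_zero, Matrix.cons_val_one, Matrix.cons_val] <;> ring)
      (fun _ _ _ => by
        ext γ; fin_cases γ <;>
          simp only [hopfPolar, PiLp.smul_apply, smul_eq_mul, Fin.isValue, Fin.zero_eta,
            Fin.mk_one, Fin.reduceFinMk, Matrix.cons_val_zero, Matrix.cons_val_one,
            Matrix.cons_val] <;> ring)
      (fun _ _ _ => by
        ext γ; fin_cases γ <;>
          simp only [hopfPolar, PiLp.add_apply, Fin.isValue, Fin.zero_eta, Fin.mk_one,
            Fin.reduceFinMk, Matrix.cons_val_zero, Matrix.cons_val_one, Matrix.cons_val] <;> ring)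
      (fun _ _ _ => by
        ext γ; fin_cases γ <;>
          simp only [hopfPolar, PiLp.smul_apply, smul_eq_mul, Fin.isValue, Fin.zero_eta,
            Fin.mk_one, Fin.reduceFinMk, Matrix.cons_val_zero, Matrix.cons_val_one,
            Matrix.cons_val] <;> ring)

theorem hopfBilin_apply (x y : EuclideanSpace ℝ (Fin 8)) : hopfBilin x y = hopfPolar x y := rfl

theorem hopfBilin_comm (x y : EuclideanSpace ℝ (Fin 8)) : hopfBilin x y = hopfBilin y x := by
  ext γ
  fin_cases γ <;>
    simp only [hopfBilin_apply, hopfPolar, Fin.isValue, Fin.zero_eta, Fin.mk_one, Fin.reduceFinMk,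
      Matrix.cons_val_zero, Matrix.cons_val_one, Matrix.cons_val] <;> ring

theorem hopfH_eq_hopfBilin : hopfH = fun x => hopfBilin x x := by
  ext x γ
  simp only [hopfH, two_mul, add_mul]
  fin_cases γ <;>
    simp only [sq, ← Quaternion.normSq_eq_norm_mul_self, Quaternion.normSq_def',
      Quaternion.re_add, Quaternion.imI_add, Quaternion.imJ_add, Quaternion.imK_add,
      Quaternion.re_mul, Quaternion.imI_mul, Quaternion.imJ_mul, Quaternion.imK_mul,
      Quaternion.re_star, Quaternion.imI_star, Quaternion.imJ_star, Quaternion.imK_star,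
      Fin.isValue, Fin.zero_eta, Fin.mk_one, Fin.reduceFinMk, Matrix.cons_val_zero,
      Matrix.cons_val_one, Matrix.cons_val] <;>
    simp only [quat1, quat2, hopfBilin_apply, hopfPolar, Fin.isValue, Matrix.cons_val_zero,
      Matrix.cons_val_one, Matrix.cons_val] <;> ring

theorem norm_quat1_sq_add_norm_quat2_sq (x : EuclideanSpace ℝ (Fin 8)) :
    ‖quat1 x‖ ^ 2 + ‖quat2 x‖ ^ 2 = ‖x‖ ^ 2 := by
  rw [sq, sq, ← Quaternion.normSq_eq_norm_mul_self, ← Quaternion.normSq_eq_norm_mul_self,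
    Quaternion.normSq_def', Quaternion.normSq_def', EuclideanSpace.norm_sq_eq]
  simp only [quat1, quat2, Fin.sum_univ_eight, Real.norm_eq_abs, sq_abs]
  ring

theorem norm_hopfH (z : EuclideanSpace ℝ (Fin 8)) : ‖hopfH z‖ = ‖z‖ ^ 2 := by
  rw [← sq_eq_sq₀ (norm_nonneg _) (by positivity), EuclideanSpace.norm_sq_eq,
    EuclideanSpace.norm_sq_eq, hopfH_eq_hopfBilin]
  simp only [Fin.sum_univ_five, Fin.sum_univ_eight, hopfBilin_apply, hopfPolar, Real.norm_eq_abs,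
    sq_abs, Matrix.cons_val_zero, Matrix.cons_val_one, Matrix.cons_val]
  ring

theorem sum_hopfBilin_single :
    ∑ i, hopfBilin (EuclideanSpace.single i 1) (EuclideanSpace.single i 1) = 0 := by
  ext γ
  fin_cases γ <;> simp [Fin.sum_univ_eight, hopfBilin_apply, hopfPolar, PiLp.single_apply]

theorem sum_hopfBilin_single_mul (z : EuclideanSpace ℝ (Fin 8)) (α β : Fin 5) :
    ∑ i, hopfBilin z (EuclideanSpace.single i 1) α * hopfBilin z (EuclideanSpace.single i 1) β =
      if α = β then ‖z‖ ^ 2 else 0 := by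
  fin_cases α <;> fin_cases β <;>
    simp only [Fin.sum_univ_eight, hopfBilin_apply, hopfPolar, PiLp.single_apply,
      EuclideanSpace.norm_sq_eq, Real.norm_eq_abs, sq_abs, Fin.isValue, Fin.zero_eta, Fin.mk_one,
      Fin.reduceFinMk, Matrix.cons_val_zero, Matrix.cons_val_one, Matrix.cons_val, Fin.reduceEq,
      ↓reduceIte, mul_one, mul_zero, add_zero, zero_add, sub_zero, zero_sub] <;> ring

theorem contDiff_hopfH : ContDiff ℝ 2 hopfH := by
  rw [hopfH_eq_hopfBilin]
  exact hopfBilin.contDiff.clm_apply contDiff_id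

theorem fderiv_hopfH : fderiv ℝ hopfH = ⇑((2 : ℝ) • hopfBilin) := by
  rw [hopfH_eq_hopfBilin]
  exact funext fun x => (hopfBilin.hasFDerivAt_apply_self_of_comm hopfBilin_comm x).fderiv

theorem sum_fderiv_hopfH_single_mul (z : EuclideanSpace ℝ (Fin 8)) (α β : Fin 5) :
    ∑ i, fderiv ℝ hopfH z (EuclideanSpace.single i 1) α *
        fderiv ℝ hopfH z (EuclideanSpace.single i 1) β =
      if α = β then 4 * ‖z‖ ^ 2 else 0 := by
  simp only [fderiv_hopfH, smul_apply, PiLp.smul_apply, smul_eq_mul]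
  simp_rw [mul_mul_mul_comm (2 : ℝ), ← mul_sum, sum_hopfBilin_single_mul]
  split_ifs <;> ring

theorem sum_fderiv_fderiv_hopfH_single (z : EuclideanSpace ℝ (Fin 8)) :
    ∑ i, fderiv ℝ (fderiv ℝ hopfH) z (EuclideanSpace.single i 1) (EuclideanSpace.single i 1) =
      0 := by
  rw [fderiv_hopfH, ContinuousLinearMap.fderiv]
  simp [← smul_sum, sum_hopfBilin_single]

/-- Δ(v ∘ π)(z) = 4(|z₁|² + |z₂|²)·(Δv)(π(z)) = 4|π(z)|·(Δv)(π(z)). -/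
theorem stmt_6 (V : Set (EuclideanSpace ℝ (Fin 5))) (hV : IsOpen V)
    (v : EuclideanSpace ℝ (Fin 5) → ℝ) (hv : ContDiffOn ℝ 2 v V)
    (z : EuclideanSpace ℝ (Fin 8)) (hz : z ∈ hopfH ⁻¹' V) :
    lap (v ∘ hopfH) z =
      4 * (‖quat1 z‖ ^ 2 + ‖quat2 z‖ ^ 2) * lap v (hopfH z) ∧
    lap (v ∘ hopfH) z = 4 * ‖hopfH z‖ * lap v (hopfH z) := by
  have hlap : lap (v ∘ hopfH) z = 4 * ‖z‖ ^ 2 * lap v (hopfH z) :=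
    lap_comp_eq_mul_lap (hv.contDiffAt (hV.mem_nhds hz)) contDiff_hopfH.contDiffAt
      (sum_fderiv_hopfH_single_mul z) (sum_fderiv_fderiv_hopfH_single z)
  rw [norm_quat1_sq_add_norm_quat2_sq, norm_hopfH]
  exact ⟨hlap, hlap⟩
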